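/- Consider a finite recurrent MDP on S that is skip-free in the negative direction on the tree. Let d be a stationary deterministic policy with average cost g(d), set x = g(d), and let d¹ be the policy of the x-revised first-return problem: d¹(i) = a_i for i ≠ 0, where a_i and y_i come from the downward recursion y_i = min_{a∈A} (c_i(a) − x + ∑_{k∈D(i)} p̄_{ik}(a) y_k)/p_{iρ(i)}(a) with a_i attaining the minimum, and d¹(0) = argmin_{a∈A} (c_0(a) − x + ∑_{k∈D(0)} p̄_{0k}(a) y_k)/(1 − p_{00}(a)). Then g(d¹) ≤ g(d). -/

import Mathlib

open Finset Filter

noncomputable section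

/-- A rooted tree structure on a state space `S`: a root, a parent map fixing the root,
such that iterating the parent map from any state reaches the root. -/
structure SFTree (S : Type*) where
  root : S
  parent : S → S
  parent_root : parent root = root
  reaches_root : ∀ i : S, ∃ n : ℕ, parent^[n] i = root

namespace SFTree

variable {S : Type*} [Fintype S] [DecidableEq S]

open Classical in
/-- The set of descendants of `i`: states `j ≠ i` whose path to the root passes through `i`. -/
def desc (T : SFTree S) (i : S) : Finset S :=
  Finset.univ.filter fun j => j ≠ i ∧ ∃ n : ℕ, T.parent^[n] j = i

open Classical in
/-- The subtree rooted at `i`: `i` together with its descendants. -/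
def subtree (T : SFTree S) (i : S) : Finset S :=
  Finset.univ.filter fun j => ∃ n : ℕ, T.parent^[n] j = i

open Classical in
/-- The states strictly after `i` on the path from `i` to `j`. -/
def delta (T : SFTree S) (i j : S) : Finset S :=
  Finset.univ.filter fun r =>
    r ≠ i ∧ (∃ n : ℕ, T.parent^[n] j = r) ∧ (∃ m : ℕ, T.parent^[m] r = i)

end SFTree

/-- A finite Markov decision process: costs and transition probabilities. -/
structure MDP (S A : Type*) [Fintype S] where
  c : S → A → ℝ
  p : S → A → S → ℝ
  p_nonneg : ∀ i a j, 0 ≤ p i a j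
  p_sum_one : ∀ i a, ∑ j, p i a j = 1

namespace MDP

variable {S A : Type*} [Fintype S] [DecidableEq S]

/-- Tail probability: the probability of jumping from `i` into the subtree rooted at `k`. -/
def ptail (M : MDP S A) (T : SFTree S) (i : S) (a : A) (k : S) : ℝ :=
  ∑ s ∈ T.subtree k, M.p i a s

/-- Skip-free in the negative direction on the tree `T`: from `i ≠ root` the only possible
transitions are to the parent of `i` or into the subtree rooted at `i`. -/
def IsSkipFree (M : MDP S A) (T : SFTree S) : Prop :=
  ∀ i, i ≠ T.root → ∀ a j, M.p i a j ≠ 0 → j = T.parent i ∨ j ∈ T.subtree i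

/-- Transition matrix of the stationary deterministic policy `d`. -/
def Pmat (M : MDP S A) (d : S → A) : Matrix S S ℝ :=
  Matrix.of fun i j => M.p i (d i) j

/-- Cost vector of the stationary deterministic policy `d`. -/
def cvec (M : MDP S A) (d : S → A) : S → ℝ := fun i => M.c i (d i)

/-- Expected average cost of the stationary deterministic policy `d` starting from `i`. -/
def avgCost (M : MDP S A) (d : S → A) (i : S) : ℝ :=
  Filter.limsup
    (fun n : ℕ => (n : ℝ)⁻¹ * ∑ t ∈ Finset.range n, ((M.Pmat d ^ t).mulVec (M.cvec d)) i)
    Filter.atTop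

end MDP

/-- A (substochastic) matrix is irreducible if every state can reach every other state
in a positive number of steps. -/
def MatIrreducible {S : Type*} [Fintype S] [DecidableEq S] (P : Matrix S S ℝ) : Prop :=
  ∀ i j, ∃ n : ℕ, 0 < n ∧ 0 < (P ^ n) i j

/-- A recurrent model: every stationary deterministic policy has an irreducible
transition matrix. -/
def IsRecurrentModel {S A : Type*} [Fintype S] [DecidableEq S] (M : MDP S A) : Prop :=
  ∀ d : S → A, MatIrreducible (M.Pmat d)

/-- The probability weight of a path of length `n`. -/
def pathWt {S : Type*} [Fintype S] (P : Matrix S S ℝ) {n : ℕ} (x : Fin (n + 1) → S) : ℝ :=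
  ∏ t : Fin n, P (x t.castSucc) (x t.succ)

open Classical in
/-- `E[f(X_n); τ > n]` for the chain with matrix `P` started at `z`, where `τ` is the
first-return epoch to `z` (the first time the chain enters `z` from a state `≠ z`). -/
def retTerm {S : Type*} [Fintype S] (P : Matrix S S ℝ) (z : S) (f : S → ℝ) (n : ℕ) : ℝ :=
  ∑ x ∈ Finset.univ.filter
      (fun (x : Fin (n + 1) → S) =>
        x 0 = z ∧ ∀ t : Fin n, ¬(x t.castSucc ≠ z ∧ x t.succ = z)),
    pathWt P x * f (x (Fin.last n))

/-- `E[∑_{t=0}^{τ-1} f(X_t)]` for the chain with matrix `P` started at `z`, where `τ` is the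
first-return epoch to `z`. -/
def retSum {S : Type*} [Fintype S] (P : Matrix S S ℝ) (z : S) (f : S → ℝ) : ℝ :=
  ∑' n : ℕ, retTerm P z f n

open Classical in
/-- `E[f(X_n); σ > n]` for the chain with matrix `P` started at `i`, where `σ` is the
first-passage epoch to `z`, `σ = min {t > 0 : X_t = z}`. -/
def passTerm {S : Type*} [Fintype S] (P : Matrix S S ℝ) (i z : S) (f : S → ℝ) (n : ℕ) : ℝ :=
  ∑ x ∈ Finset.univ.filter
      (fun (x : Fin (n + 1) → S) => x 0 = i ∧ ∀ t : Fin n, x t.succ ≠ z),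
    pathWt P x * f (x (Fin.last n))

/-- `E[∑_{t=0}^{σ-1} f(X_t)]` for the chain with matrix `P` started at `i`, where `σ` is the
first-passage epoch to `z`. -/
def passSum {S : Type*} [Fintype S] (P : Matrix S S ℝ) (i z : S) (f : S → ℝ) : ℝ :=
  ∑' n : ℕ, passTerm P i z f n

end

/-!
Put `h = T.pathSum y`, the sum of `y` over the path from a state up to the root, and let
`N i a` (`revisedCost`) be the numerator of the recursion. Skip-freeness turns the drift
`c_i(a) + (P_a h)_i - h_i - x` into `N i a - p_{iρ(i)}(a) y_i` off the root and into `N 0 a` at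
the root, so by the choice of `y` it is `≥ 0` off the root under `d` and `= 0` there under `d¹`.
Averaged against the positive stationary distribution of `P_d`, the drift gives `g(d) - x = 0`,
which forces `N 0 (d 0) ≤ 0` and hence `N 0 (d¹ 0) ≤ 0`. So the drift under `d¹` is `≤ 0`
everywhere, and averaging against the stationary distribution of `P_{d¹}` gives `g(d¹) ≤ x`.
The average cost of an irreducible chain is the stationary mean of the cost because the Poisson
equation `w + P u = u + π ⬝ᵥ w` is solvable, `ker (1 - P)` being the constants.
-/

open Matrix

namespace SFTree

variable {S : Type*} (T : SFTree S)

theorem iterate_parent_root (n : ℕ) : T.parent^[n] T.root = T.root :=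
  Function.iterate_fixed T.parent_root n

theorem eq_root_of_iterate_eq_self {i : S} {p : ℕ} (hp : 0 < p) (h : T.parent^[p] i = i) :
    i = T.root := by
  obtain ⟨r, hr⟩ := T.reaches_root i
  have hper : Function.IsPeriodicPt T.parent (p * r) i := Function.IsPeriodicPt.mul_const h r
  calc i = T.parent^[p * r] i := hper.eq.symm
    _ = T.parent^[p * r - r] (T.parent^[r] i) := by
        rw [← Function.iterate_add_apply, Nat.sub_add_cancel (Nat.le_mul_of_pos_left r hp)]
    _ = T.root := by rw [hr, iterate_parent_root]

theorem parent_ne_self {i : S} (hi : i ≠ T.root) : T.parent i ≠ i :=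
  fun h => hi (T.eq_root_of_iterate_eq_self one_pos h)

variable [Fintype S]

theorem mem_subtree {i j : S} : j ∈ T.subtree i ↔ ∃ n : ℕ, T.parent^[n] j = i := by
  simp [subtree]

theorem mem_subtree_self (i : S) : i ∈ T.subtree i := T.mem_subtree.2 ⟨0, rfl⟩

theorem mem_subtree_root (j : S) : j ∈ T.subtree T.root := T.mem_subtree.2 (T.reaches_root j)

theorem mem_subtree_parent (i : S) : i ∈ T.subtree (T.parent i) := T.mem_subtree.2 ⟨1, rfl⟩

theorem subtree_trans {i j k : S} (hk : k ∈ T.subtree j) (hj : j ∈ T.subtree i) :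
    k ∈ T.subtree i := by
  obtain ⟨m, rfl⟩ := T.mem_subtree.1 hk
  obtain ⟨n, rfl⟩ := T.mem_subtree.1 hj
  exact T.mem_subtree.2 ⟨n + m, Function.iterate_add_apply _ _ _ _⟩

theorem subtree_antisymm {i j : S} (hj : j ∈ T.subtree i) (hi : i ∈ T.subtree j) : i = j := by
  obtain ⟨n, hn⟩ := T.mem_subtree.1 hj
  obtain ⟨m, hm⟩ := T.mem_subtree.1 hi
  rcases Nat.eq_zero_or_pos (n + m) with h0 | hpos
  · rw [← hn, show n = 0 by omega, Function.iterate_zero_apply]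
  · have hi : T.parent^[n + m] i = i := by rw [Function.iterate_add_apply, hm, hn]
    have hj : T.parent^[m + n] j = j := by rw [Function.iterate_add_apply, hn, hm]
    rw [T.eq_root_of_iterate_eq_self hpos hi, T.eq_root_of_iterate_eq_self (by omega) hj]

theorem subtree_total {i j r : S} (hr : j ∈ T.subtree r) (hi : j ∈ T.subtree i) :
    r ∈ T.subtree i ∨ i ∈ T.subtree r := by
  obtain ⟨n, rfl⟩ := T.mem_subtree.1 hr
  obtain ⟨m, rfl⟩ := T.mem_subtree.1 hi
  rcases le_total n m with h | h
  · left
    refine T.mem_subtree.2 ⟨m - n, ?_⟩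
    rw [← Function.iterate_add_apply, Nat.sub_add_cancel h]
  · right
    refine T.mem_subtree.2 ⟨n - m, ?_⟩
    rw [← Function.iterate_add_apply, Nat.sub_add_cancel h]

theorem parent_mem_subtree {j r : S} (h : j ∈ T.subtree r) (hne : j ≠ r) :
    T.parent j ∈ T.subtree r := by
  obtain ⟨n, hn⟩ := T.mem_subtree.1 h
  cases n with
  | zero => exact absurd hn hne
  | succ n => exact T.mem_subtree.2 ⟨n, by rwa [← Function.iterate_succ_apply]⟩

theorem parent_not_mem_subtree {i : S} (hi : i ≠ T.root) : T.parent i ∉ T.subtree i := by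
  intro h
  obtain ⟨n, hn⟩ := T.mem_subtree.1 h
  exact hi (T.eq_root_of_iterate_eq_self n.succ_pos (by rwa [Function.iterate_succ_apply]))

variable [DecidableEq S]

theorem mem_desc {i k : S} : k ∈ T.desc i ↔ k ≠ i ∧ k ∈ T.subtree i := by
  simp [desc, subtree]

theorem mem_delta {i j r : S} :
    r ∈ T.delta i j ↔ r ≠ i ∧ j ∈ T.subtree r ∧ r ∈ T.subtree i := by
  simp [delta, subtree]

theorem delta_eq_filter (i j : S) : T.delta i j = (T.desc i).filter (j ∈ T.subtree ·) := by
  ext r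
  rw [mem_filter, mem_delta, mem_desc]
  tauto

theorem sum_mul_sum_delta (q y : S → ℝ) (i : S) :
    ∑ j, q j * ∑ r ∈ T.delta i j, y r
      = ∑ k ∈ T.desc i, (∑ s ∈ T.subtree k, q s) * y k := by
  simp only [delta_eq_filter, mul_sum, sum_filter]
  rw [sum_comm]
  refine sum_congr rfl fun k _ => ?_
  simp only [mul_ite, mul_zero, sum_mul]
  rw [sum_ite_mem, univ_inter]

theorem delta_root_root : T.delta T.root T.root = ∅ := by
  ext r
  simp only [mem_delta, notMem_empty, iff_false]
  exact fun ⟨hr, hroot, _⟩ => hr (T.subtree_antisymm (T.mem_subtree_root r) hroot).symm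

theorem delta_parent_eq_empty {i : S} (hi : i ≠ T.root) : T.delta i (T.parent i) = ∅ := by
  ext r
  simp only [mem_delta, notMem_empty, iff_false]
  exact fun ⟨_, hpr, hri⟩ => T.parent_not_mem_subtree hi (T.subtree_trans hpr hri)

theorem delta_parent_self {i : S} (hi : i ≠ T.root) : T.delta (T.parent i) i = {i} := by
  ext r
  rw [mem_delta, mem_singleton]
  constructor
  · rintro ⟨hr, hir, hrp⟩
    by_contra hne
    exact hr (T.subtree_antisymm (T.parent_mem_subtree hir (Ne.symm hne)) hrp)
  · rintro rfl
    exact ⟨(T.parent_ne_self hi).symm, T.mem_subtree_self r, T.mem_subtree_parent r⟩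

theorem delta_root_eq_union {i j : S} (hj : j ∈ T.subtree i) :
    T.delta T.root j = T.delta T.root i ∪ T.delta i j := by
  ext r
  simp only [mem_union, mem_delta]
  constructor
  · rintro ⟨hr, hjr, -⟩
    rcases T.subtree_total hjr hj with hri | hir
    · by_cases hre : r = i
      · subst hre
        exact Or.inl ⟨hr, T.mem_subtree_self r, T.mem_subtree_root r⟩
      · exact Or.inr ⟨hre, hjr, hri⟩
    · exact Or.inl ⟨hr, hir, T.mem_subtree_root r⟩
  · rintro (⟨hr, hir, -⟩ | ⟨hri, hjr, hri'⟩)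
    · exact ⟨hr, T.subtree_trans hj hir, T.mem_subtree_root r⟩
    · refine ⟨?_, hjr, T.mem_subtree_root r⟩
      rintro rfl
      exact hri (T.subtree_antisymm hri' (T.mem_subtree_root i)).symm

theorem disjoint_delta_root_delta (i j : S) : Disjoint (T.delta T.root i) (T.delta i j) := by
  refine disjoint_left.2 fun r hr hr' => ?_
  obtain ⟨-, hir, -⟩ := T.mem_delta.1 hr
  obtain ⟨hri, -, hri'⟩ := T.mem_delta.1 hr'
  exact hri (T.subtree_antisymm hir hri')

noncomputable def pathSum (y : S → ℝ) (j : S) : ℝ := ∑ r ∈ T.delta T.root j, y r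

theorem pathSum_root (y : S → ℝ) : T.pathSum y T.root = 0 := by
  rw [pathSum, delta_root_root, sum_empty]

theorem pathSum_of_mem_subtree (y : S → ℝ) {i j : S} (hj : j ∈ T.subtree i) :
    T.pathSum y j = T.pathSum y i + ∑ r ∈ T.delta i j, y r := by
  rw [pathSum, pathSum, T.delta_root_eq_union hj, sum_union (T.disjoint_delta_root_delta i j)]

theorem pathSum_parent (y : S → ℝ) {i : S} (hi : i ≠ T.root) :
    T.pathSum y (T.parent i) = T.pathSum y i - y i := by
  rw [T.pathSum_of_mem_subtree y (T.mem_subtree_parent i), T.delta_parent_self hi, sum_singleton]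
  ring

end SFTree

section MarkovChain

variable {S : Type*} [Fintype S] {P : Matrix S S ℝ}

theorem sum_mul_add_mulVec_sub {π : S → ℝ} (hπ : π ᵥ* P = π) (hπ1 : ∑ j, π j = 1)
    (w h : S → ℝ) (x : ℝ) :
    ∑ i, π i * (w i + (P *ᵥ h) i - h i - x) = π ⬝ᵥ w - x := by
  have hPh : π ⬝ᵥ (P *ᵥ h) = π ⬝ᵥ h := by rw [dotProduct_mulVec, hπ]
  simp only [dotProduct] at hPh ⊢
  simp only [mul_sub, mul_add, sum_sub_distrib, sum_add_distrib, ← sum_mul, hπ1, hPh]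
  ring

variable [DecidableEq S]

-- `MDP.avgCost M d` is definitionally `cesaroLimsup (M.Pmat d) (M.cvec d)`.
noncomputable def cesaroLimsup (P : Matrix S S ℝ) (w : S → ℝ) (i : S) : ℝ :=
  limsup (fun n : ℕ => (n : ℝ)⁻¹ * ∑ t ∈ range n, (P ^ t *ᵥ w) i) atTop

theorem mulVec_const_of_mem_rowStochastic (hP : P ∈ rowStochastic ℝ S) (c : ℝ) :
    P *ᵥ (fun _ => c) = fun _ => c := by
  ext i
  simp only [mulVec, dotProduct, ← sum_mul, sum_row_of_mem_rowStochastic hP, one_mul]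

theorem abs_mulVec_le_norm (hP : P ∈ rowStochastic ℝ S) (u : S → ℝ) (i : S) :
    |(P *ᵥ u) i| ≤ ‖u‖ := by
  calc |(P *ᵥ u) i| ≤ ∑ j, |P i j * u j| := abs_sum_le_sum_abs _ _
    _ ≤ ∑ j, P i j * ‖u‖ := sum_le_sum fun j _ => by
        rw [abs_mul, abs_of_nonneg (nonneg_of_mem_rowStochastic hP), ← Real.norm_eq_abs]
        exact mul_le_mul_of_nonneg_left (norm_le_pi_norm u j) (nonneg_of_mem_rowStochastic hP)
    _ = ‖u‖ := by rw [← sum_mul, sum_row_of_mem_rowStochastic hP, one_mul]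

theorem eq_of_mulVec_eq_self (hP : P ∈ rowStochastic ℝ S) (hirr : MatIrreducible P)
    {u : S → ℝ} (hu : P *ᵥ u = u) (j k : S) : u j = u k := by
  -- Maximum principle: `u` is maximal at every state reachable from a maximum point `m`.
  obtain ⟨m, -, hm⟩ := exists_max_image univ u ⟨j, mem_univ j⟩
  suffices h : ∀ k, u k = u m by rw [h j, h k]
  intro k
  obtain ⟨n, -, hpos⟩ := hirr m k
  have hPn := pow_mem hP n
  have hfix : ∀ n, P ^ n *ᵥ u = u := fun n => by
    induction n with
    | zero => simp
    | succ n ih => rw [pow_succ, ← mulVec_mulVec, hu, ih]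
  have hsum : ∑ l, (P ^ n) m l * (u m - u l) = 0 := by
    have hm := congrFun (hfix n) m
    simp only [mulVec, dotProduct] at hm
    simp only [mul_sub, sum_sub_distrib, ← sum_mul, sum_row_of_mem_rowStochastic hPn, one_mul, hm,
      sub_self]
  have hterm := (sum_eq_zero_iff_of_nonneg fun l _ => mul_nonneg
    (nonneg_of_mem_rowStochastic hPn) (sub_nonneg.2 (hm l (mem_univ l)))).1 hsum k (mem_univ k)
  linarith [(mul_eq_zero.1 hterm).resolve_left hpos.ne']

theorem ker_one_sub_mulVecLin [Nonempty S] (hP : P ∈ rowStochastic ℝ S)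
    (hirr : MatIrreducible P) : LinearMap.ker (1 - P).mulVecLin = ℝ ∙ (1 : S → ℝ) := by
  apply le_antisymm
  · intro u hu
    rw [LinearMap.mem_ker, mulVecLin_apply, sub_mulVec, one_mulVec, sub_eq_zero] at hu
    refine Submodule.mem_span_singleton.2 ⟨u (Classical.arbitrary S), funext fun k => ?_⟩
    simpa using eq_of_mulVec_eq_self hP hirr hu.symm (Classical.arbitrary S) k
  · rw [Submodule.span_le, Set.singleton_subset_iff, SetLike.mem_coe, LinearMap.mem_ker,
      mulVecLin_apply, sub_mulVec, one_mulVec, one_vecMul_of_mem_rowStochastic hP, sub_self]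

theorem exists_poisson_solution [Nonempty S] (hP : P ∈ rowStochastic ℝ S)
    (hirr : MatIrreducible P) {π : S → ℝ} (hπ : π ᵥ* P = π) (hπ1 : ∑ j, π j = 1)
    (w : S → ℝ) : ∃ u : S → ℝ, ∀ i, w i + (P *ᵥ u) i = u i + π ⬝ᵥ w := by
  set ℓ := dotProductEquiv ℝ S π
  have hℓ : ∀ v, ℓ v = π ⬝ᵥ v := dotProductEquiv_apply_apply ℝ S π
  have hle : LinearMap.range (1 - P).mulVecLin ≤ LinearMap.ker ℓ := by
    rintro _ ⟨v, rfl⟩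
    rw [LinearMap.mem_ker, hℓ, mulVecLin_apply, dotProduct_mulVec, vecMul_sub, vecMul_one, hπ,
      sub_self, zero_dotProduct]
  have hℓ0 : ℓ ≠ 0 := fun h => by
    simpa [hℓ, dotProduct_one, hπ1] using LinearMap.congr_fun h 1
  have hrange : LinearMap.range (1 - P).mulVecLin = LinearMap.ker ℓ := by
    refine Submodule.eq_of_le_of_finrank_le hle ?_
    have h1 := LinearMap.finrank_range_add_finrank_ker (1 - P).mulVecLin
    have h2 := Module.Dual.finrank_ker_add_one_of_ne_zero hℓ0
    rw [ker_one_sub_mulVecLin hP hirr, finrank_span_singleton one_ne_zero] at h1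
    omega
  obtain ⟨u, hu⟩ : w - (π ⬝ᵥ w) • 1 ∈ LinearMap.range (1 - P).mulVecLin := by
    rw [hrange, LinearMap.mem_ker, hℓ, dotProduct_sub, dotProduct_smul, dotProduct_one, hπ1,
      smul_eq_mul, mul_one, sub_self]
  refine ⟨u, fun i => ?_⟩
  have hi := congrFun hu i
  simp only [mulVecLin_apply, sub_mulVec, one_mulVec, Pi.sub_apply, Pi.smul_apply, Pi.one_apply,
    smul_eq_mul, mul_one] at hi
  linarith

theorem exists_vecMul_eq_self_ne_zero [Nonempty S] (hP : P ∈ rowStochastic ℝ S) :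
    ∃ v : S → ℝ, v ≠ 0 ∧ v ᵥ* P = v := by
  have hdet : (1 - P).det = 0 := exists_mulVec_eq_zero_iff.1 ⟨1, one_ne_zero, by
    rw [sub_mulVec, one_mulVec, one_vecMul_of_mem_rowStochastic hP, sub_self]⟩
  obtain ⟨v, hv, hv0⟩ := exists_vecMul_eq_zero_iff.2 hdet
  exact ⟨v, hv, by rwa [vecMul_sub, vecMul_one, sub_eq_zero, eq_comm] at hv0⟩

theorem abs_vecMul_eq_self (hP : P ∈ rowStochastic ℝ S) {v : S → ℝ} (hv : v ᵥ* P = v) :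
    |v| ᵥ* P = |v| := by
  -- `|v| ≤ |v| ᵥ* P` pointwise, and both sides have the same total mass.
  have hle : ∀ j, |v| j ≤ (|v| ᵥ* P) j := fun j => by
    calc |v| j = |(v ᵥ* P) j| := by rw [hv, Pi.abs_apply]
      _ ≤ ∑ k, |v k * P k j| := abs_sum_le_sum_abs _ _
      _ = (|v| ᵥ* P) j := sum_congr rfl fun k _ => by
          rw [abs_mul, abs_of_nonneg (nonneg_of_mem_rowStochastic hP)]; rfl
  have hsum : (|v| ᵥ* P) ⬝ᵥ 1 = |v| ⬝ᵥ 1 := by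
    rw [← dotProduct_mulVec, one_vecMul_of_mem_rowStochastic hP]
  simp only [dotProduct_one] at hsum
  funext j
  exact ((sum_eq_sum_iff_of_le fun j _ => hle j).1 hsum.symm j (mem_univ j)).symm

theorem pos_of_vecMul_eq_self (hP : P ∈ rowStochastic ℝ S) (hirr : MatIrreducible P)
    {μ : S → ℝ} (hμ0 : 0 ≤ μ) (hμ : μ ≠ 0) (hμP : μ ᵥ* P = μ) (j : S) :
    0 < μ j := by
  obtain ⟨k, hk⟩ := Function.ne_iff.1 hμ
  obtain ⟨n, -, hpos⟩ := hirr k j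
  have hfix : ∀ n, μ ᵥ* P ^ n = μ := fun n => by
    induction n with
    | zero => simp
    | succ n ih => rw [pow_succ, ← vecMul_vecMul, ih, hμP]
  calc 0 < μ k * (P ^ n) k j := mul_pos ((hμ0 k).lt_of_ne' hk) hpos
    _ ≤ ∑ l, μ l * (P ^ n) l j := single_le_sum (f := fun l => μ l * (P ^ n) l j)
        (fun l _ => mul_nonneg (hμ0 l) (nonneg_of_mem_rowStochastic (pow_mem hP n))) (mem_univ k)
    _ = μ j := congrFun (hfix n) j

theorem exists_pos_invariant [Nonempty S] (hP : P ∈ rowStochastic ℝ S)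
    (hirr : MatIrreducible P) :
    ∃ π : S → ℝ, (∀ j, 0 < π j) ∧ π ᵥ* P = π ∧ ∑ j, π j = 1 := by
  obtain ⟨v, hv, hvP⟩ := exists_vecMul_eq_self_ne_zero hP
  have hpos := pos_of_vecMul_eq_self hP hirr (abs_nonneg v) (by simpa using hv)
    (abs_vecMul_eq_self hP hvP)
  have hs : 0 < ∑ j, |v| j := sum_pos (fun j _ => hpos j) univ_nonempty
  refine ⟨(∑ j, |v| j)⁻¹ • |v|, fun j => mul_pos (inv_pos.2 hs) (hpos j), ?_, ?_⟩
  · rw [smul_vecMul, abs_vecMul_eq_self hP hvP]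
  · simp only [Pi.smul_apply, smul_eq_mul, ← mul_sum, inv_mul_cancel₀ hs.ne']

theorem sum_range_pow_mulVec_eq (hP : P ∈ rowStochastic ℝ S) {w u : S → ℝ} {γ : ℝ}
    (hu : ∀ i, w i + (P *ᵥ u) i = u i + γ) (n : ℕ) (i : S) :
    ∑ t ∈ range n, (P ^ t *ᵥ w) i = n * γ + u i - (P ^ n *ᵥ u) i := by
  have hw : w = u + (fun _ => γ) - P *ᵥ u := funext fun i => by
    simp only [Pi.add_apply, Pi.sub_apply]; linarith [hu i]
  have hstep : ∀ t, (P ^ t *ᵥ w) i = (P ^ t *ᵥ u) i - (P ^ (t + 1) *ᵥ u) i + γ := by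
    intro t
    rw [hw, mulVec_sub, mulVec_add, mulVec_const_of_mem_rowStochastic (pow_mem hP t),
      mulVec_mulVec, ← pow_succ]
    simp only [Pi.add_apply, Pi.sub_apply]
    ring
  simp only [hstep, sum_add_distrib, sum_range_sub' (fun t => (P ^ t *ᵥ u) i), sum_const,
    card_range, nsmul_eq_mul, pow_zero, one_mulVec]
  ring

theorem cesaroLimsup_eq_dotProduct (hP : P ∈ rowStochastic ℝ S) (hirr : MatIrreducible P)
    {π : S → ℝ} (hπ : π ᵥ* P = π) (hπ1 : ∑ j, π j = 1) (w : S → ℝ) (i : S) :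
    cesaroLimsup P w i = π ⬝ᵥ w := by
  have : Nonempty S := ⟨i⟩
  obtain ⟨u, hu⟩ := exists_poisson_solution hP hirr hπ hπ1 w
  refine Tendsto.limsup_eq ?_
  have hbdd : IsBoundedUnder (· ≤ ·) atTop (fun n : ℕ => ‖u i - (P ^ n *ᵥ u) i‖) :=
    isBoundedUnder_of ⟨‖u‖ + ‖u‖, fun n => (norm_sub_le _ _).trans
      (add_le_add (norm_le_pi_norm u i) (abs_mulVec_le_norm (pow_mem hP n) u i))⟩
  have hlim := ((tendsto_inv_atTop_nhds_zero_nat (𝕜 := ℝ)).zero_mul_isBoundedUnder_le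
    hbdd).const_add (π ⬝ᵥ w)
  rw [add_zero] at hlim
  refine hlim.congr' ?_
  filter_upwards [eventually_ne_atTop 0] with n hn
  rw [sum_range_pow_mulVec_eq hP hu]
  field_simp
  ring

theorem cesaroLimsup_eq_cesaroLimsup (hP : P ∈ rowStochastic ℝ S) (hirr : MatIrreducible P)
    (w : S → ℝ) (i j : S) : cesaroLimsup P w i = cesaroLimsup P w j := by
  have : Nonempty S := ⟨i⟩
  obtain ⟨π, -, hπ, hπ1⟩ := exists_pos_invariant hP hirr
  rw [cesaroLimsup_eq_dotProduct hP hirr hπ hπ1, cesaroLimsup_eq_dotProduct hP hirr hπ hπ1]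

theorem cesaroLimsup_le_of_add_mulVec_le (hP : P ∈ rowStochastic ℝ S)
    (hirr : MatIrreducible P) {w h : S → ℝ} {x : ℝ}
    (hle : ∀ i, w i + (P *ᵥ h) i ≤ h i + x)
    (i : S) : cesaroLimsup P w i ≤ x := by
  have : Nonempty S := ⟨i⟩
  obtain ⟨π, hπpos, hπ, hπ1⟩ := exists_pos_invariant hP hirr
  have hsum : ∑ j, π j * (w j + (P *ᵥ h) j - h j - x) ≤ 0 :=
    sum_nonpos fun j _ => mul_nonpos_of_nonneg_of_nonpos (hπpos j).le (by linarith [hle j])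
  rw [cesaroLimsup_eq_dotProduct hP hirr hπ hπ1]
  linarith [sum_mul_add_mulVec_sub hπ hπ1 w h x]

theorem nonpos_of_le_add_mulVec (hP : P ∈ rowStochastic ℝ S) (hirr : MatIrreducible P)
    {w h : S → ℝ} {x κ : ℝ} {z : S} (hle : ∀ i, i ≠ z → h i + x ≤ w i + (P *ᵥ h) i)
    (hz : h z + x + κ ≤ w z + (P *ᵥ h) z) (hx : cesaroLimsup P w z = x) : κ ≤ 0 := by
  have : Nonempty S := ⟨z⟩
  obtain ⟨π, hπpos, hπ, hπ1⟩ := exists_pos_invariant hP hirr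
  have hrest : 0 ≤ ∑ j ∈ univ.erase z, π j * (w j + (P *ᵥ h) j - h j - x) :=
    sum_nonneg fun j hj => mul_nonneg (hπpos j).le (by linarith [hle j (ne_of_mem_erase hj)])
  have htot := sum_mul_add_mulVec_sub hπ hπ1 w h x
  rw [← cesaroLimsup_eq_dotProduct hP hirr hπ hπ1 w z, hx, sub_self,
    ← add_sum_erase _ _ (mem_univ z)] at htot
  have hzκ : π z * κ ≤ π z * (w z + (P *ᵥ h) z - h z - x) :=
    mul_le_mul_of_nonneg_left (by linarith) (hπpos z).le
  exact nonpos_of_mul_nonpos_right (by linarith) (hπpos z)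

end MarkovChain

namespace MDP

variable {S A : Type*} [Fintype S] [DecidableEq S] (M : MDP S A) (T : SFTree S)

theorem Pmat_mem_rowStochastic (d : S → A) : M.Pmat d ∈ rowStochastic ℝ S :=
  mem_rowStochastic_iff_sum.2 ⟨fun i j => M.p_nonneg i (d i) j, fun i => M.p_sum_one i (d i)⟩

theorem sum_p_mul_pathSum_of_ne_root (hsf : M.IsSkipFree T) {i : S} (hi : i ≠ T.root) (a : A)
    (y : S → ℝ) :
    ∑ j, M.p i a j * T.pathSum y j
      = T.pathSum y i - M.p i a (T.parent i) * y i + ∑ k ∈ T.desc i, M.ptail T i a k * y k := by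
  have hterm : ∀ j, M.p i a j * T.pathSum y j
      = M.p i a j * (T.pathSum y i + ∑ r ∈ T.delta i j, y r)
        - if j = T.parent i then M.p i a j * y i else 0 := by
    intro j
    by_cases hp : M.p i a j = 0
    · simp [hp]
    rcases hsf i hi a j hp with rfl | hj
    · rw [T.pathSum_parent y hi, T.delta_parent_eq_empty hi, if_pos rfl, sum_empty]
      ring
    · rw [T.pathSum_of_mem_subtree y hj,
        if_neg (ne_of_mem_of_not_mem hj (T.parent_not_mem_subtree hi)), sub_zero]
  simp only [hterm, sum_sub_distrib, mul_add, sum_add_distrib, ← sum_mul, M.p_sum_one,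
    sum_ite_eq', mem_univ, if_true, T.sum_mul_sum_delta, ptail]
  ring

noncomputable def revisedCost (x : ℝ) (y : S → ℝ) (i : S) (a : A) : ℝ :=
  M.c i a - x + ∑ k ∈ T.desc i, M.ptail T i a k * y k

theorem cvec_add_mulVec_pathSum_root (d : S → A) (x : ℝ) (y : S → ℝ) :
    M.cvec d T.root + (M.Pmat d *ᵥ T.pathSum y) T.root
      = T.pathSum y T.root + x + M.revisedCost T x y T.root (d T.root) := by
  have hPh : (M.Pmat d *ᵥ T.pathSum y) T.root
      = ∑ k ∈ T.desc T.root, M.ptail T T.root (d T.root) k * y k :=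
    T.sum_mul_sum_delta _ y T.root
  rw [hPh, T.pathSum_root, revisedCost, cvec]
  ring

theorem cvec_add_mulVec_pathSum_of_ne_root (hsf : M.IsSkipFree T) (d : S → A) (x : ℝ)
    (y : S → ℝ) {i : S} (hi : i ≠ T.root) :
    M.cvec d i + (M.Pmat d *ᵥ T.pathSum y) i
      = T.pathSum y i + x + (M.revisedCost T x y i (d i) - M.p i (d i) (T.parent i) * y i) := by
  have hPh : (M.Pmat d *ᵥ T.pathSum y) i = ∑ j, M.p i (d i) j * T.pathSum y j := rfl
  rw [hPh, M.sum_p_mul_pathSum_of_ne_root T hsf hi, revisedCost, cvec]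
  ring

end MDP

theorem stmt6_general {S A : Type*} [Fintype S] [DecidableEq S] [Fintype A]
    (T : SFTree S) (M : MDP S A)
    (hsf : M.IsSkipFree T) (hrec : IsRecurrentModel M)
    (h00 : ∀ a : A, M.p T.root a T.root < 1)
    (hpar : ∀ i, i ≠ T.root → ∀ a : A, 0 < M.p i a (T.parent i))
    (d : S → A) (x : ℝ) (hx : x = M.avgCost d T.root)
    (y : S → ℝ) (aSel : S → A)
    (hy : ∀ i, i ≠ T.root →
      y i = ⨅ a : A, (M.c i a - x + ∑ k ∈ T.desc i, M.ptail T i a k * y k)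
          / M.p i a (T.parent i))
    (ha : ∀ i, i ≠ T.root →
      (M.c i (aSel i) - x + ∑ k ∈ T.desc i, M.ptail T i (aSel i) k * y k)
          / M.p i (aSel i) (T.parent i) = y i)
    (d1 : S → A)
    (hd1root : (M.c T.root (d1 T.root) - x
          + ∑ k ∈ T.desc T.root, M.ptail T T.root (d1 T.root) k * y k)
          / (1 - M.p T.root (d1 T.root) T.root)
        = ⨅ a : A, (M.c T.root a - x + ∑ k ∈ T.desc T.root, M.ptail T T.root a k * y k)
          / (1 - M.p T.root a T.root))
    (hd1 : ∀ i, i ≠ T.root → d1 i = aSel i) :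
    ∀ i, M.avgCost d1 i ≤ M.avgCost d i := by
  intro i
  have hstep : ∀ j, j ≠ T.root →
      T.pathSum y j + x ≤ M.cvec d j + (M.Pmat d *ᵥ T.pathSum y) j := by
    intro j hj
    have hyj : y j ≤ M.revisedCost T x y j (d j) / M.p j (d j) (T.parent j) :=
      (hy j hj).trans_le (ciInf_le (Finite.bddBelow_range _) (d j))
    rw [M.cvec_add_mulVec_pathSum_of_ne_root T hsf d x y hj]
    linarith [(le_div_iff₀ (hpar j hj (d j))).1 hyj]
  have hκ : M.revisedCost T x y T.root (d T.root) ≤ 0 :=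
    nonpos_of_le_add_mulVec (M.Pmat_mem_rowStochastic d) (hrec d) hstep
      (M.cvec_add_mulVec_pathSum_root T d x y).ge hx.symm
  have hκ1 : M.revisedCost T x y T.root (d1 T.root) ≤ 0 := by
    have hle : M.revisedCost T x y T.root (d1 T.root) / (1 - M.p T.root (d1 T.root) T.root) ≤ 0 :=
      hd1root.trans_le ((ciInf_le (Finite.bddBelow_range _) (d T.root)).trans
        (div_nonpos_of_nonpos_of_nonneg hκ (sub_nonneg.2 (h00 _).le)))
    simpa using (div_le_iff₀ (sub_pos.2 (h00 _))).1 hle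
  have hstep1 : ∀ j, M.cvec d1 j + (M.Pmat d1 *ᵥ T.pathSum y) j ≤ T.pathSum y j + x := by
    intro j
    by_cases hj : j = T.root
    · rw [hj, M.cvec_add_mulVec_pathSum_root T d1 x y]
      linarith
    · have hyj := (div_eq_iff (hpar j hj (aSel j)).ne').1 (ha j hj)
      rw [M.cvec_add_mulVec_pathSum_of_ne_root T hsf d1 x y hj, hd1 j hj]
      linarith [show M.revisedCost T x y j (aSel j) = y j * M.p j (aSel j) (T.parent j) from hyj]
  calc M.avgCost d1 i ≤ x :=
        cesaroLimsup_le_of_add_mulVec_le (M.Pmat_mem_rowStochastic d1) (hrec d1) hstep1 i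
    _ = M.avgCost d i :=
        hx.trans (cesaroLimsup_eq_cesaroLimsup (M.Pmat_mem_rowStochastic d) (hrec d) _ _ _)

/-- for a finite recurrent skip-free MDP on a tree, let `d` be a policy and
`x = g(d)` its average cost; let `d¹` be the optimal policy of the `x`-revised first-return
problem (using the downward-recursion minimisers off the root and
`argmin_a (c₀(a)-x+∑ p̄ y)/(1-p₀₀(a))` at the root). Then `g(d¹) ≤ g(d)`. -/
theorem stmt6 {S A : Type*} [Fintype S] [DecidableEq S] [Fintype A] [Nonempty A]
    (T : SFTree S) (M : MDP S A)
    (hsf : M.IsSkipFree T) (hrec : IsRecurrentModel M)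
    (h00 : ∀ a : A, M.p T.root a T.root < 1)
    (hpar : ∀ i, i ≠ T.root → ∀ a : A, 0 < M.p i a (T.parent i))
    (d : S → A) (x : ℝ) (hx : x = M.avgCost d T.root)
    (y : S → ℝ) (aSel : S → A)
    (hy : ∀ i, i ≠ T.root →
      y i = ⨅ a : A, (M.c i a - x + ∑ k ∈ T.desc i, M.ptail T i a k * y k)
          / M.p i a (T.parent i))
    (ha : ∀ i, i ≠ T.root →
      (M.c i (aSel i) - x + ∑ k ∈ T.desc i, M.ptail T i (aSel i) k * y k)
          / M.p i (aSel i) (T.parent i) = y i)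
    (d1 : S → A)
    (hd1root : (M.c T.root (d1 T.root) - x
          + ∑ k ∈ T.desc T.root, M.ptail T T.root (d1 T.root) k * y k)
          / (1 - M.p T.root (d1 T.root) T.root)
        = ⨅ a : A, (M.c T.root a - x + ∑ k ∈ T.desc T.root, M.ptail T T.root a k * y k)
          / (1 - M.p T.root a T.root))
    (hd1 : ∀ i, i ≠ T.root → d1 i = aSel i) :
    ∀ i, M.avgCost d1 i ≤ M.avgCost d i :=
  stmt6_general T M hsf hrec h00 hpar d x hx y aSel hy ha d1 hd1root hd1
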